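/- The trace of the tidal tensor of the Randers spray connection decomposes as E^i_i = e^i_i − 2 D⁰_{δ_i}B^i + B^l_i B^i_l, where e^i_i = r_{jl}y^jy^l·(sign convention: e^i_j = r^{\,i}_{l\,jk}y^ly^k) is the trace of the gravitational tidal tensor, B^i_j = ∂B^i/∂y^j, and D⁰ is the Levi-Civita Berwald connection. -/

import Mathlib

open scoped BigOperators

variable {n : ℕ}

/-- Partial derivative of a function of `(x, y)` with respect to the fiber coordinate `y^j`. -/
noncomputable def pdy (f : (Fin n → ℝ) → (Fin n → ℝ) → ℝ) (j : Fin n) :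
    (Fin n → ℝ) → (Fin n → ℝ) → ℝ :=
  fun x y => fderiv ℝ (f x) y (Pi.single j 1)

/-- Partial derivative of a function of `(x, y)` with respect to the base coordinate `x^j`. -/
noncomputable def pdx (f : (Fin n → ℝ) → (Fin n → ℝ) → ℝ) (j : Fin n) :
    (Fin n → ℝ) → (Fin n → ℝ) → ℝ :=
  fun x y => fderiv ℝ (fun x' => f x' y) x (Pi.single j 1)

/-- Partial derivative of a function on the base manifold. -/
noncomputable def pd (f : (Fin n → ℝ) → ℝ) (j : Fin n) (x : Fin n → ℝ) : ℝ :=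
  fderiv ℝ f x (Pi.single j 1)

/-- The quadratic form `g_{ij}(x) y^i y^j`. -/
noncomputable def Qf (g : Fin n → Fin n → (Fin n → ℝ) → ℝ) (x y : Fin n → ℝ) : ℝ :=
  ∑ i, ∑ j, g i j x * y i * y j

/-- The norm `‖y‖ = √(g_{ij} y^i y^j)`. -/
noncomputable def nrm (g : Fin n → Fin n → (Fin n → ℝ) → ℝ) (x y : Fin n → ℝ) : ℝ :=
  Real.sqrt (Qf g x y)

/-- The distinguished section `l_i = g_{ik} y^k / ‖y‖`. -/
noncomputable def lf (g : Fin n → Fin n → (Fin n → ℝ) → ℝ) (i : Fin n) (x y : Fin n → ℝ) : ℝ :=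
  (∑ k, g i k x * y k) / nrm g x y

/-- The angular metric `h_{ij} = g_{ij} - l_i l_j`. -/
noncomputable def hang (g : Fin n → Fin n → (Fin n → ℝ) → ℝ) (i j : Fin n) (x y : Fin n → ℝ) : ℝ :=
  g i j x - lf g i x y * lf g j x y

/-- Horizontal derivative `δ_k f = ∂f/∂x^k - N^l_k ∂f/∂y^l` of an Ehresmann connection `N`. -/
noncomputable def deltaD (N : Fin n → Fin n → (Fin n → ℝ) → (Fin n → ℝ) → ℝ)
    (k : Fin n) (f : (Fin n → ℝ) → (Fin n → ℝ) → ℝ) (x y : Fin n → ℝ) : ℝ :=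
  pdx f k x y - ∑ l, N l k x y * pdy f l x y

/-- Curvature `R^i_{jk} = δ_k N^i_j - δ_j N^i_k` of an Ehresmann connection. -/
noncomputable def curvN (N : Fin n → Fin n → (Fin n → ℝ) → (Fin n → ℝ) → ℝ)
    (i j k : Fin n) (x y : Fin n → ℝ) : ℝ :=
  deltaD N k (N i j) x y - deltaD N j (N i k) x y

/-- Tidal tensor `E^i_j = R^i_{jk} y^k`. -/
noncomputable def tidal (N : Fin n → Fin n → (Fin n → ℝ) → (Fin n → ℝ) → ℝ)
    (i j : Fin n) (x y : Fin n → ℝ) : ℝ :=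
  ∑ k, curvN N i j k x y * y k

/-- Christoffel symbols of the metric `g` (with `ginv` its inverse). -/
noncomputable def christoffel (g ginv : Fin n → Fin n → (Fin n → ℝ) → ℝ)
    (i j k : Fin n) (x : Fin n → ℝ) : ℝ :=
  (1 / 2) * ∑ h, ginv i h x * (pd (g h j) k x + pd (g h k) j x - pd (g j k) h x)

/-- Riemann curvature tensor
`r^i_{jkl} = ∂_l γ^i_{jk} - ∂_k γ^i_{jl} + γ^h_{jk} γ^i_{hl} - γ^h_{jl} γ^i_{hk}`. -/
noncomputable def riem (g ginv : Fin n → Fin n → (Fin n → ℝ) → ℝ)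
    (i j k l : Fin n) (x : Fin n → ℝ) : ℝ :=
  pd (fun x' => christoffel g ginv i j k x') l x - pd (fun x' => christoffel g ginv i j l x') k x
    + ∑ h, christoffel g ginv h j k x * christoffel g ginv i h l x
    - ∑ h, christoffel g ginv h j l x * christoffel g ginv i h k x

/-- The Levi-Civita spray connection `N^i_j = γ^i_{jk} y^k`. -/
noncomputable def NLC (g ginv : Fin n → Fin n → (Fin n → ℝ) → ℝ)
    (i j : Fin n) (x y : Fin n → ℝ) : ℝ :=
  ∑ k, christoffel g ginv i j k x * y k

/-- Electromagnetic 2-form `F_{ij} = ∂_i A_j - ∂_j A_i` of a potential 1-form `A`. -/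
noncomputable def Fform (A : Fin n → (Fin n → ℝ) → ℝ) (i j : Fin n) (x : Fin n → ℝ) : ℝ :=
  pd (A j) i x - pd (A i) j x

/-- Randers-type spray with electromagnetic tensor `Fl` (lower indices):
`2G^i = γ^i_{jk} y^j y^k - α ‖y‖ F^i_j y^j`. -/
noncomputable def GsprayF (g ginv : Fin n → Fin n → (Fin n → ℝ) → ℝ)
    (Fl : Fin n → Fin n → (Fin n → ℝ) → ℝ) (α : ℝ) (i : Fin n) (x y : Fin n → ℝ) : ℝ :=
  (1 / 2) * ∑ j, ∑ k, christoffel g ginv i j k x * y j * y k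
    - (α / 2) * nrm g x y * ∑ j, (∑ h, ginv i h x * Fl h j x) * y j

/-- Randers spray of the Lagrangian `√(g ẋ ẋ) + α A_i ẋ^i`. -/
noncomputable def Gspray (g ginv : Fin n → Fin n → (Fin n → ℝ) → ℝ)
    (A : Fin n → (Fin n → ℝ) → ℝ) (α : ℝ) (i : Fin n) (x y : Fin n → ℝ) : ℝ :=
  GsprayF g ginv (Fform A) α i x y

/-- Spray connection `N^i_j = ∂G^i/∂y^j` of a spray `G`. -/
noncomputable def Nspray (G : Fin n → (Fin n → ℝ) → (Fin n → ℝ) → ℝ) (i j : Fin n) :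
    (Fin n → ℝ) → (Fin n → ℝ) → ℝ :=
  pdy (G i) j

/-- Berwald connection coefficients `G^i_{jk} = ∂²G^i/∂y^j∂y^k`. -/
noncomputable def Gconn (G : Fin n → (Fin n → ℝ) → (Fin n → ℝ) → ℝ) (i j k : Fin n) :
    (Fin n → ℝ) → (Fin n → ℝ) → ℝ :=
  pdy (Nspray G i j) k

/-- Contortion vector `B^i = -(α/2) ‖y‖ F^i_j y^j`. -/
noncomputable def Bvec (g ginv : Fin n → Fin n → (Fin n → ℝ) → ℝ)
    (Fl : Fin n → Fin n → (Fin n → ℝ) → ℝ) (α : ℝ) (i : Fin n) (x y : Fin n → ℝ) : ℝ :=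
  -(α / 2) * nrm g x y * ∑ j, (∑ h, ginv i h x * Fl h j x) * y j

section Aux
variable (g ginv : Fin n → Fin n → (Fin n → ℝ) → ℝ) (A : Fin n → (Fin n → ℝ) → ℝ) (α : ℝ)

noncomputable def cF (i j : Fin n) (x : Fin n → ℝ) : ℝ := ∑ h, ginv i h x * Fform A h j x
noncomputable def LyF (j : Fin n) (x y : Fin n → ℝ) : ℝ := ∑ k, g j k x * y k
noncomputable def CvF (i : Fin n) (x y : Fin n → ℝ) : ℝ := ∑ j, cF ginv A i j x * y j
noncomputable def B1eF (i j : Fin n) (x y : Fin n → ℝ) : ℝ :=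
  -(α/2) * (LyF g j x y / nrm g x y * CvF ginv A i x y + nrm g x y * cF ginv A i j x)
noncomputable def B2eF (i j l : Fin n) (x y : Fin n → ℝ) : ℝ :=
  -(α/2) * ((g j l x - LyF g j x y * LyF g l x y / Qf g x y) / nrm g x y * CvF ginv A i x y
    + LyF g j x y / nrm g x y * cF ginv A i l x + LyF g l x y / nrm g x y * cF ginv A i j x)

variable (hgsymm : ∀ i j x, g i j x = g j i x)
  (hinv : ∀ i j x, (∑ h, ginv i h x * g h j x) = if i = j then (1 : ℝ) else 0)

lemma Fform_antisymm (i j : Fin n) (x : Fin n → ℝ) : Fform A i j x = - Fform A j i x := by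
  simp [Fform]

-- inverse lemmas
lemma ginv_symm (hgsymm : ∀ i j x, g i j x = g j i x)
    (hinv : ∀ i j x, (∑ h, ginv i h x * g h j x) = if i = j then (1 : ℝ) else 0)
    (i j : Fin n) (x : Fin n → ℝ) : ginv i j x = ginv j i x := by
  classical
  set M : Matrix (Fin n) (Fin n) ℝ := Matrix.of fun i j => g i j x with hM
  set N : Matrix (Fin n) (Fin n) ℝ := Matrix.of fun i j => ginv i j x with hN
  have hNM : N * M = 1 := by
    ext a b
    simp [Matrix.mul_apply, hM, hN, Matrix.one_apply, hinv a b x]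
  have hMN : M * N = 1 := mul_eq_one_comm.mp hNM
  have hMsymm : M.transpose = M := by
    ext a b; simp [hM, Matrix.transpose_apply, hgsymm b a x]
  have hNtM : N.transpose * M = 1 := by
    have := congrArg Matrix.transpose hMN
    rw [Matrix.transpose_mul, Matrix.transpose_one, hMsymm] at this
    exact this
  have hNt : N.transpose = N := by
    calc N.transpose = N.transpose * (M * N) := by rw [hMN, Matrix.mul_one]
    _ = (N.transpose * M) * N := by rw [Matrix.mul_assoc]
    _ = N := by rw [hNtM, Matrix.one_mul]
  have := congrFun (congrFun hNt j) i
  simpa [Matrix.transpose_apply, hN] using this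

lemma hinv2 (hgsymm : ∀ i j x, g i j x = g j i x)
    (hinv : ∀ i j x, (∑ h, ginv i h x * g h j x) = if i = j then (1 : ℝ) else 0)
    (k h : Fin n) (x : Fin n → ℝ) :
    (∑ i, g i k x * ginv i h x) = if k = h then (1 : ℝ) else 0 := by
  calc (∑ i, g i k x * ginv i h x) = ∑ i, ginv h i x * g i k x := by
        refine Finset.sum_congr rfl fun i _ => ?_
        rw [ginv_symm g ginv hgsymm hinv i h x, mul_comm]
  _ = if h = k then 1 else 0 := hinv h k x
  _ = if k = h then 1 else 0 := by by_cases hkh : k = h <;> simp [hkh, Ne.symm]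

lemma core_gc (hgsymm : ∀ i j x, g i j x = g j i x)
    (hinv : ∀ i j x, (∑ h, ginv i h x * g h j x) = if i = j then (1 : ℝ) else 0)
    (k j : Fin n) (x : Fin n → ℝ) :
    (∑ i, g i k x * cF ginv A i j x) = Fform A k j x := by
  calc (∑ i, g i k x * cF ginv A i j x)
      = ∑ i, ∑ h, g i k x * ginv i h x * Fform A h j x := by
        refine Finset.sum_congr rfl fun i _ => ?_
        rw [cF, Finset.mul_sum]
        exact Finset.sum_congr rfl fun h _ => by ring
  _ = ∑ h, (∑ i, g i k x * ginv i h x) * Fform A h j x := by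
        rw [Finset.sum_comm]
        exact Finset.sum_congr rfl fun h _ => by rw [Finset.sum_mul]
  _ = ∑ h, (if k = h then (1:ℝ) else 0) * Fform A h j x := by
        refine Finset.sum_congr rfl fun h _ => ?_
        rw [hinv2 g ginv hgsymm hinv k h x]
  _ = Fform A k j x := by simp

lemma sum_Ly_c (hgsymm : ∀ i j x, g i j x = g j i x)
    (hinv : ∀ i j x, (∑ h, ginv i h x * g h j x) = if i = j then (1 : ℝ) else 0)
    (j : Fin n) (x y : Fin n → ℝ) :
    (∑ i, LyF g i x y * cF ginv A i j x) = ∑ k, y k * Fform A k j x := by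
  calc (∑ i, LyF g i x y * cF ginv A i j x)
      = ∑ i, ∑ k, y k * (g i k x * cF ginv A i j x) := by
        refine Finset.sum_congr rfl fun i _ => ?_
        rw [LyF, Finset.sum_mul]
        exact Finset.sum_congr rfl fun k _ => by ring
  _ = ∑ k, y k * ∑ i, g i k x * cF ginv A i j x := by
        rw [Finset.sum_comm]
        exact Finset.sum_congr rfl fun k _ => by rw [Finset.mul_sum]
  _ = ∑ k, y k * Fform A k j x := by
        refine Finset.sum_congr rfl fun k _ => ?_
        rw [core_gc g ginv A hgsymm hinv k j x]

lemma sum_g_Cv (hgsymm : ∀ i j x, g i j x = g j i x)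
    (hinv : ∀ i j x, (∑ h, ginv i h x * g h j x) = if i = j then (1 : ℝ) else 0)
    (l : Fin n) (x y : Fin n → ℝ) :
    (∑ i, g i l x * CvF ginv A i x y) = ∑ j, y j * Fform A l j x := by
  calc (∑ i, g i l x * CvF ginv A i x y)
      = ∑ i, ∑ j, y j * (g i l x * cF ginv A i j x) := by
        refine Finset.sum_congr rfl fun i _ => ?_
        rw [CvF, Finset.mul_sum]
        exact Finset.sum_congr rfl fun j _ => by ring
  _ = ∑ j, y j * ∑ i, g i l x * cF ginv A i j x := by
        rw [Finset.sum_comm]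
        exact Finset.sum_congr rfl fun j _ => by rw [Finset.mul_sum]
  _ = ∑ j, y j * Fform A l j x := by
        refine Finset.sum_congr rfl fun j _ => ?_
        rw [core_gc g ginv A hgsymm hinv l j x]

lemma double_antisym (y : Fin n → ℝ) (F : Fin n → Fin n → ℝ)
    (hF : ∀ i j, F i j = - F j i) :
    (∑ j, ∑ k, y j * (y k * F k j)) = 0 := by
  have h : (∑ j, ∑ k, y j * (y k * F k j)) = - ∑ j, ∑ k, y j * (y k * F k j) := by
    nth_rewrite 1 [Finset.sum_comm]
    rw [← Finset.sum_neg_distrib]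
    refine Finset.sum_congr rfl fun j _ => ?_
    rw [← Finset.sum_neg_distrib]
    refine Finset.sum_congr rfl fun k _ => ?_
    rw [hF k j]; ring
  linarith

lemma sum_Ly_Cv (hgsymm : ∀ i j x, g i j x = g j i x)
    (hinv : ∀ i j x, (∑ h, ginv i h x * g h j x) = if i = j then (1 : ℝ) else 0)
    (x y : Fin n → ℝ) :
    (∑ i, LyF g i x y * CvF ginv A i x y) = 0 := by
  calc (∑ i, LyF g i x y * CvF ginv A i x y)
      = ∑ i, ∑ j, y j * (LyF g i x y * cF ginv A i j x) := by
        refine Finset.sum_congr rfl fun i _ => ?_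
        rw [CvF, Finset.mul_sum]
        exact Finset.sum_congr rfl fun j _ => by ring
  _ = ∑ j, y j * ∑ i, LyF g i x y * cF ginv A i j x := by
        rw [Finset.sum_comm]
        exact Finset.sum_congr rfl fun j _ => by rw [Finset.mul_sum]
  _ = ∑ j, ∑ k, y j * (y k * Fform A k j x) := by
        refine Finset.sum_congr rfl fun j _ => ?_
        rw [sum_Ly_c g ginv A hgsymm hinv j x y, Finset.mul_sum]
  _ = 0 := double_antisym y (fun i j => Fform A i j x)
        (fun i j => Fform_antisymm A i j x)

lemma sum_c_diag (hgsymm : ∀ i j x, g i j x = g j i x)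
    (hinv : ∀ i j x, (∑ h, ginv i h x * g h j x) = if i = j then (1 : ℝ) else 0)
    (x : Fin n → ℝ) :
    (∑ i, cF ginv A i i x) = 0 := by
  have h : (∑ i, cF ginv A i i x) = - ∑ i, cF ginv A i i x := by
    calc (∑ i, cF ginv A i i x) = ∑ i, ∑ h, ginv i h x * Fform A h i x := rfl
    _ = ∑ h, ∑ i, ginv i h x * Fform A h i x := Finset.sum_comm
    _ = - ∑ i, ∑ h, ginv i h x * Fform A h i x := by
        rw [← Finset.sum_neg_distrib]
        refine Finset.sum_congr rfl fun h _ => ?_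
        rw [← Finset.sum_neg_distrib]
        refine Finset.sum_congr rfl fun i _ => ?_
        rw [ginv_symm g ginv hgsymm hinv h i x, Fform_antisymm A i h x]
        ring
    _ = - ∑ i, cF ginv A i i x := rfl
  linarith

lemma sum_y_Ly (x y : Fin n → ℝ) :
    (∑ k, LyF g k x y * y k) = Qf g x y := by
  rw [Qf]
  refine Finset.sum_congr rfl fun k _ => ?_
  rw [LyF, Finset.sum_mul]
  exact Finset.sum_congr rfl fun j _ => by ring

lemma sum_y_gl (hgsymm : ∀ i j x, g i j x = g j i x) (l : Fin n) (x y : Fin n → ℝ) :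
    (∑ k, g k l x * y k) = LyF g l x y := by
  rw [LyF]
  exact Finset.sum_congr rfl fun k _ => by rw [hgsymm k l x]

end Aux

section Alg
variable (g ginv : Fin n → Fin n → (Fin n → ℝ) → ℝ) (A : Fin n → (Fin n → ℝ) → ℝ) (α : ℝ)
variable (hgsymm : ∀ i j x, g i j x = g j i x)
  (hinv : ∀ i j x, (∑ h, ginv i h x * g h j x) = if i = j then (1 : ℝ) else 0)

lemma Bvec_eq (i : Fin n) (x y : Fin n → ℝ) :
    Bvec g ginv (Fform A) α i x y = -(α/2) * nrm g x y * CvF ginv A i x y := rfl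

lemma traceB1 (hgsymm : ∀ i j x, g i j x = g j i x)
    (hinv : ∀ i j x, (∑ h, ginv i h x * g h j x) = if i = j then (1 : ℝ) else 0)
    (x y : Fin n → ℝ) (hQ : 0 < Qf g x y) :
    (∑ i, B1eF g ginv A α i i x y) = 0 := by
  have hs : nrm g x y ≠ 0 := ne_of_gt (Real.sqrt_pos.mpr hQ)
  have h1 : ∀ i ∈ Finset.univ, B1eF g ginv A α i i x y
      = -(α/2)/nrm g x y * (LyF g i x y * CvF ginv A i x y)
        + (-(α/2)*nrm g x y) * cF ginv A i i x := by
    intro i _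
    rw [B1eF]; field_simp; ring
  rw [Finset.sum_congr rfl h1, Finset.sum_add_distrib, ← Finset.mul_sum, ← Finset.mul_sum,
    sum_Ly_Cv g ginv A hgsymm hinv x y, sum_c_diag g ginv A hgsymm hinv x]
  ring

lemma eulerB1 (i : Fin n) (x y : Fin n → ℝ) (hQ : 0 < Qf g x y) :
    (∑ k, B1eF g ginv A α i k x y * y k) = 2 * Bvec g ginv (Fform A) α i x y := by
  have hs : nrm g x y ≠ 0 := ne_of_gt (Real.sqrt_pos.mpr hQ)
  have hQs : nrm g x y ^ 2 = Qf g x y := Real.sq_sqrt hQ.le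
  have h1 : ∀ k ∈ Finset.univ, B1eF g ginv A α i k x y * y k
      = -(α/2) * CvF ginv A i x y / nrm g x y * (LyF g k x y * y k)
        + (-(α/2)*nrm g x y) * (cF ginv A i k x * y k) := by
    intro k _
    rw [B1eF]; field_simp; ring
  rw [Finset.sum_congr rfl h1, Finset.sum_add_distrib, ← Finset.mul_sum, ← Finset.mul_sum,
    sum_y_Ly g x y, Bvec_eq]
  have : (∑ k, cF ginv A i k x * y k) = CvF ginv A i x y := rfl
  rw [this, ← hQs]
  field_simp; ring

lemma eulerB2 (hgsymm : ∀ i j x, g i j x = g j i x)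
    (hinv : ∀ i j x, (∑ h, ginv i h x * g h j x) = if i = j then (1 : ℝ) else 0)
    (i l : Fin n) (x y : Fin n → ℝ) (hQ : 0 < Qf g x y) :
    (∑ k, B2eF g ginv A α i k l x y * y k) = B1eF g ginv A α i l x y := by
  have hs : nrm g x y ≠ 0 := ne_of_gt (Real.sqrt_pos.mpr hQ)
  have hQ0 : Qf g x y ≠ 0 := ne_of_gt hQ
  have hQs : nrm g x y ^ 2 = Qf g x y := Real.sq_sqrt hQ.le
  have h1 : ∀ k ∈ Finset.univ, B2eF g ginv A α i k l x y * y k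
      = -(α/2) * CvF ginv A i x y / nrm g x y * (g k l x * y k)
        + (-(α/2) * (cF ginv A i l x / nrm g x y
            - LyF g l x y * CvF ginv A i x y / (Qf g x y * nrm g x y)))
          * (LyF g k x y * y k)
        + (-(α/2) * LyF g l x y / nrm g x y) * (cF ginv A i k x * y k) := by
    intro k _
    rw [B2eF]; field_simp; ring
  rw [Finset.sum_congr rfl h1, Finset.sum_add_distrib, Finset.sum_add_distrib,
    ← Finset.mul_sum, ← Finset.mul_sum, ← Finset.mul_sum,
    sum_y_gl g hgsymm l x y, sum_y_Ly g x y]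
  have : (∑ k, cF ginv A i k x * y k) = CvF ginv A i x y := rfl
  rw [this, B1eF, ← hQs]
  field_simp; ring

lemma traceB2 (hgsymm : ∀ i j x, g i j x = g j i x)
    (hinv : ∀ i j x, (∑ h, ginv i h x * g h j x) = if i = j then (1 : ℝ) else 0)
    (l : Fin n) (x y : Fin n → ℝ) (hQ : 0 < Qf g x y) :
    (∑ i, B2eF g ginv A α i i l x y) = 0 := by
  have hs : nrm g x y ≠ 0 := ne_of_gt (Real.sqrt_pos.mpr hQ)
  have hQ0 : Qf g x y ≠ 0 := ne_of_gt hQ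
  have h1 : ∀ i ∈ Finset.univ, B2eF g ginv A α i i l x y
      = -(α/2)/nrm g x y * (g i l x * CvF ginv A i x y)
        + (α/2) * LyF g l x y / (Qf g x y * nrm g x y) * (LyF g i x y * CvF ginv A i x y)
        + (-(α/2)/nrm g x y) * (LyF g i x y * cF ginv A i l x)
        + (-(α/2) * LyF g l x y / nrm g x y) * cF ginv A i i x := by
    intro i _
    rw [B2eF]; field_simp; ring
  rw [Finset.sum_congr rfl h1, Finset.sum_add_distrib, Finset.sum_add_distrib,
    Finset.sum_add_distrib, ← Finset.mul_sum, ← Finset.mul_sum, ← Finset.mul_sum,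
    ← Finset.mul_sum, sum_Ly_Cv g ginv A hgsymm hinv x y, sum_c_diag g ginv A hgsymm hinv x,
    sum_g_Cv g ginv A hgsymm hinv l x y, sum_Ly_c g ginv A hgsymm hinv l x y]
  have h2 : (∑ j, y j * Fform A l j x) = - ∑ k, y k * Fform A k l x := by
    rw [← Finset.sum_neg_distrib]
    refine Finset.sum_congr rfl fun j _ => ?_
    rw [Fform_antisymm A l j x]; ring
  rw [h2]; ring

end Alg

section Deriv
variable (g ginv : Fin n → Fin n → (Fin n → ℝ) → ℝ) (A : Fin n → (Fin n → ℝ) → ℝ) (α : ℝ)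

noncomputable def projL (k : Fin n) : (Fin n → ℝ) →L[ℝ] ℝ := ContinuousLinearMap.proj k

lemma hasFDerivAt_lin (a : Fin n → ℝ) (y : Fin n → ℝ) :
    HasFDerivAt (fun y' : Fin n → ℝ => ∑ k, a k * y' k) (∑ k, a k • projL k) y := by
  apply HasFDerivAt.fun_sum
  intro k _
  exact ((projL k).hasFDerivAt (x := y)).const_mul (a k)

lemma lin_eval (a : Fin n → ℝ) (j : Fin n) :
    (∑ k, a k • projL k) (Pi.single j 1) = a j := by
  simp [projL, Pi.single_apply]

noncomputable def DQ (g : Fin n → Fin n → (Fin n → ℝ) → ℝ) (x y : Fin n → ℝ) :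
    (Fin n → ℝ) →L[ℝ] ℝ :=
  ∑ i, ∑ j, g i j x • (y i • projL j + y j • projL i)

lemma hasFDerivAt_Qf (x y : Fin n → ℝ) :
    HasFDerivAt (fun y' => Qf g x y') (DQ g x y) y := by
  apply HasFDerivAt.fun_sum; intro i _
  apply HasFDerivAt.fun_sum; intro j _
  have h := (((projL (n := n) i).hasFDerivAt (x := y)).mul
      ((projL (n := n) j).hasFDerivAt (x := y))).const_mul (g i j x)
  simpa [mul_assoc, projL] using h

lemma DQ_eval (g : Fin n → Fin n → (Fin n → ℝ) → ℝ) (x y : Fin n → ℝ)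
    (hgs : ∀ i j, g i j x = g j i x) (m : Fin n) :
    DQ g x y (Pi.single m 1) = 2 * ∑ k, g m k x * y k := by
  have h1 : DQ g x y (Pi.single m 1)
      = ∑ i, ∑ j, (g i j x * (y i * (if j = m then (1:ℝ) else 0))
        + g i j x * (y j * (if i = m then (1:ℝ) else 0))) := by
    simp [DQ, projL, Pi.single_apply, mul_add]
  rw [h1]
  simp only [mul_ite, mul_one, mul_zero, Finset.sum_add_distrib, Finset.sum_ite_eq',
    Finset.mem_univ, if_true]
  rw [Finset.sum_comm]
  simp only [Finset.sum_ite_eq', Finset.mem_univ, if_true]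
  rw [two_mul]
  congr 1
  exact Finset.sum_congr rfl fun i _ => by rw [hgs i m]

lemma hasFDerivAt_nrm (x y : Fin n → ℝ) (hQ : 0 < Qf g x y) :
    HasFDerivAt (fun y' => nrm g x y') ((1 / (2 * nrm g x y)) • DQ g x y) y := by
  have h1 := Real.hasDerivAt_sqrt (ne_of_gt hQ)
  have h2 := hasFDerivAt_Qf g x y
  have h3 := h1.comp_hasFDerivAt y h2
  simpa [nrm, Function.comp_def] using h3

lemma hasFDerivAt_Bvec_y (i : Fin n) (x y : Fin n → ℝ) (hQ : 0 < Qf g x y) :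
    HasFDerivAt (fun y' => Bvec g ginv (Fform A) α i x y')
      ((-(α/2)) • (nrm g x y • (∑ j, cF ginv A i j x • projL j)
        + CvF ginv A i x y • ((1 / (2 * nrm g x y)) • DQ g x y))) y := by
  have hC : HasFDerivAt (fun y' : Fin n → ℝ => ∑ j, cF ginv A i j x * y' j)
      (∑ j, cF ginv A i j x • projL j) y := hasFDerivAt_lin _ y
  have hs := hasFDerivAt_nrm g x y hQ
  have h := (hs.mul hC).const_mul (-(α/2))
  simpa [Bvec, cF, CvF, mul_assoc] using h

lemma pdy_Bvec (hgsymm : ∀ i j x, g i j x = g j i x)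
    (i j : Fin n) (x y : Fin n → ℝ) (hQ : 0 < Qf g x y) :
    pdy (Bvec g ginv (Fform A) α i) j x y = B1eF g ginv A α i j x y := by
  have hs : nrm g x y ≠ 0 := ne_of_gt (Real.sqrt_pos.mpr hQ)
  have h := hasFDerivAt_Bvec_y g ginv A α i x y hQ
  have h2 : pdy (Bvec g ginv (Fform A) α i) j x y
      = ((-(α/2)) • (nrm g x y • (∑ j, cF ginv A i j x • projL j)
        + CvF ginv A i x y • ((1 / (2 * nrm g x y)) • DQ g x y))) (Pi.single j 1) := by
    rw [pdy, h.fderiv]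
  rw [h2]
  simp only [ContinuousLinearMap.smul_apply, ContinuousLinearMap.add_apply, smul_eq_mul,
    lin_eval, DQ_eval g x y (fun i j => hgsymm i j x) j]
  simp only [B1eF, LyF]
  field_simp
  ring

lemma diffy_Bvec (i : Fin n) (x y : Fin n → ℝ) (hQ : 0 < Qf g x y) :
    DifferentiableAt ℝ (fun y' => Bvec g ginv (Fform A) α i x y') y :=
  (hasFDerivAt_Bvec_y g ginv A α i x y hQ).differentiableAt

lemma pdy_NLC (i j l : Fin n) (x y : Fin n → ℝ) :
    pdy (NLC g ginv i j) l x y = christoffel g ginv i j l x := by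
  have h := hasFDerivAt_lin (fun k => christoffel g ginv i j k x) y
  have h2 : (NLC g ginv i j x) = fun y' => ∑ k, christoffel g ginv i j k x * y' k := rfl
  rw [pdy, h2, h.fderiv, lin_eval]

lemma diffy_NLC (i j : Fin n) (x y : Fin n → ℝ) :
    DifferentiableAt ℝ (fun y' => NLC g ginv i j x y') y := by
  have h := hasFDerivAt_lin (fun k => christoffel g ginv i j k x) y
  exact h.differentiableAt

lemma christoffel_symm (hgsymm : ∀ i j x, g i j x = g j i x) (i j k : Fin n) (x : Fin n → ℝ) :
    christoffel g ginv i j k x = christoffel g ginv i k j x := by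
  rw [christoffel, christoffel]
  congr 1
  refine Finset.sum_congr rfl fun h _ => ?_
  have e : g j k = g k j := funext fun x' => hgsymm j k x'
  rw [e]
  ring

lemma Gspray_eq (i : Fin n) (x y : Fin n → ℝ) :
    Gspray g ginv A α i x y
      = (1/2) * Qf (christoffel g ginv i) x y + Bvec g ginv (Fform A) α i x y := by
  rw [Gspray, GsprayF, Bvec, Qf]
  ring

lemma Nspray_eq (hgsymm : ∀ i j x, g i j x = g j i x) (i j : Fin n) (x y : Fin n → ℝ)
    (hQ : 0 < Qf g x y) :
    Nspray (Gspray g ginv A α) i j x y = NLC g ginv i j x y + B1eF g ginv A α i j x y := by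
  have hq := (hasFDerivAt_Qf (christoffel g ginv i) x y).const_mul ((1:ℝ)/2)
  have hb := hasFDerivAt_Bvec_y g ginv A α i x y hQ
  have h := hq.fun_add hb
  have hGf : (Gspray g ginv A α i x)
      = fun y' => (1/2) * Qf (christoffel g ginv i) x y'
        + Bvec g ginv (Fform A) α i x y' := funext fun y' => Gspray_eq g ginv A α i x y'
  have hs : nrm g x y ≠ 0 := ne_of_gt (Real.sqrt_pos.mpr hQ)
  rw [show Nspray (Gspray g ginv A α) i j x y
      = fderiv ℝ (Gspray g ginv A α i x) y (Pi.single j 1) from rfl, hGf, h.fderiv]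
  simp only [ContinuousLinearMap.smul_apply, ContinuousLinearMap.add_apply, smul_eq_mul,
    lin_eval, DQ_eval g x y (fun i j => hgsymm i j x) j,
    DQ_eval (christoffel g ginv i) x y (fun a b => christoffel_symm g ginv hgsymm i a b x) j]
  have hNLC : (∑ k, christoffel g ginv i j k x * y k) = NLC g ginv i j x y := rfl
  rw [hNLC]
  simp only [B1eF, LyF]
  field_simp
  ring

lemma pdy_B1e (hgsymm : ∀ i j x, g i j x = g j i x) (i j l : Fin n) (x y : Fin n → ℝ)
    (hQ : 0 < Qf g x y) :
    pdy (B1eF g ginv A α i j) l x y = B2eF g ginv A α i j l x y := by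
  have hs : nrm g x y ≠ 0 := ne_of_gt (Real.sqrt_pos.mpr hQ)
  have hQs : nrm g x y ^ 2 = Qf g x y := Real.sq_sqrt hQ.le
  have hLy : HasFDerivAt (fun y' => LyF g j x y') (∑ k, g j k x • projL k) y :=
    hasFDerivAt_lin _ y
  have hC : HasFDerivAt (fun y' => CvF ginv A i x y') (∑ k, cF ginv A i k x • projL k) y :=
    hasFDerivAt_lin _ y
  have hn := hasFDerivAt_nrm g x y hQ
  have hinv' : HasFDerivAt (fun y' => (nrm g x y')⁻¹)
      ((-(nrm g x y ^ 2)⁻¹) • ((1 / (2 * nrm g x y)) • DQ g x y)) y :=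
    (hasDerivAt_inv hs).comp_hasFDerivAt y hn
  have h := (((hLy.fun_mul hinv').fun_mul hC).fun_add (hn.mul_const (cF ginv A i j x))).const_mul (-(α/2))
  have h2 : pdy (B1eF g ginv A α i j) l x y
      = (fderiv ℝ (fun y' => -(α/2) * (LyF g j x y' * (nrm g x y')⁻¹ * CvF ginv A i x y'
          + nrm g x y' * cF ginv A i j x)) y) (Pi.single l 1) := rfl
  rw [h2, h.fderiv]
  simp only [ContinuousLinearMap.smul_apply, ContinuousLinearMap.add_apply,
    ContinuousLinearMap.sub_apply, smul_eq_mul, lin_eval,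
    DQ_eval g x y (fun i j => hgsymm i j x) l]
  simp only [B2eF, LyF, ← hQs]
  field_simp
  ring

lemma diffy_B1e (i j : Fin n) (x y : Fin n → ℝ) (hQ : 0 < Qf g x y) :
    DifferentiableAt ℝ (fun y' => B1eF g ginv A α i j x y') y := by
  have hs : nrm g x y ≠ 0 := ne_of_gt (Real.sqrt_pos.mpr hQ)
  have hLy : HasFDerivAt (fun y' => LyF g j x y') (∑ k, g j k x • projL k) y :=
    hasFDerivAt_lin _ y
  have hC : HasFDerivAt (fun y' => CvF ginv A i x y') (∑ k, cF ginv A i k x • projL k) y :=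
    hasFDerivAt_lin _ y
  have hn := hasFDerivAt_nrm g x y hQ
  have hinv' : HasFDerivAt (fun y' => (nrm g x y')⁻¹)
      ((-(nrm g x y ^ 2)⁻¹) • ((1 / (2 * nrm g x y)) • DQ g x y)) y :=
    (hasDerivAt_inv hs).comp_hasFDerivAt y hn
  have h := (((hLy.mul hinv').mul hC).add (hn.mul_const (cF ginv A i j x))).const_mul (-(α/2))
  exact h.differentiableAt

end Deriv

section XDeriv
variable (g ginv : Fin n → Fin n → (Fin n → ℝ) → ℝ) (A : Fin n → (Fin n → ℝ) → ℝ) (α : ℝ)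

lemma contDiff_pd {f : (Fin n → ℝ) → ℝ} (hf : ContDiff ℝ (⊤ : ℕ∞) f) (j : Fin n) :
    ContDiff ℝ (⊤ : ℕ∞) (pd f j) := by
  have h1 : ContDiff ℝ (⊤ : ℕ∞) (fderiv ℝ f) := hf.fderiv_right (by simp)
  exact h1.clm_apply contDiff_const

lemma contDiff_Fform (hA : ∀ i, ContDiff ℝ (⊤ : ℕ∞) (A i)) (i j : Fin n) :
    ContDiff ℝ (⊤ : ℕ∞) (Fform A i j) :=
  (contDiff_pd (hA j) i).sub (contDiff_pd (hA i) j)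

lemma contDiff_cF (hginv : ∀ i j, ContDiff ℝ (⊤ : ℕ∞) (ginv i j)) (hA : ∀ i, ContDiff ℝ (⊤ : ℕ∞) (A i))
    (i j : Fin n) : ContDiff ℝ (⊤ : ℕ∞) (cF ginv A i j) :=
  ContDiff.sum fun h _ => (hginv i h).mul (contDiff_Fform A hA h j)

lemma contDiff_christoffel (hg : ∀ i j, ContDiff ℝ (⊤ : ℕ∞) (g i j))
    (hginv : ∀ i j, ContDiff ℝ (⊤ : ℕ∞) (ginv i j)) (i j k : Fin n) :
    ContDiff ℝ (⊤ : ℕ∞) (christoffel g ginv i j k) :=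
  contDiff_const.mul (ContDiff.sum fun h _ => (hginv i h).mul
    (((contDiff_pd (hg h j) k).add (contDiff_pd (hg h k) j)).sub (contDiff_pd (hg j k) h)))

lemma diffx_NLC (hg : ∀ i j, ContDiff ℝ (⊤ : ℕ∞) (g i j)) (hginv : ∀ i j, ContDiff ℝ (⊤ : ℕ∞) (ginv i j))
    (i j : Fin n) (x y : Fin n → ℝ) :
    DifferentiableAt ℝ (fun x' => NLC g ginv i j x' y) x :=
  DifferentiableAt.fun_sum fun k _ =>
    (((contDiff_christoffel g ginv hg hginv i j k).differentiable
      (by simp)).differentiableAt).mul_const (y k)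

lemma diffx_Qf (hg : ∀ i j, ContDiff ℝ (⊤ : ℕ∞) (g i j)) (x y : Fin n → ℝ) :
    DifferentiableAt ℝ (fun x' => Qf g x' y) x :=
  DifferentiableAt.fun_sum fun i _ => DifferentiableAt.fun_sum fun j _ =>
    ((((hg i j).differentiable (by simp)).differentiableAt).mul_const (y i)).mul_const (y j)

lemma diffx_nrm (hg : ∀ i j, ContDiff ℝ (⊤ : ℕ∞) (g i j)) (x y : Fin n → ℝ) (hQ : 0 < Qf g x y) :
    DifferentiableAt ℝ (fun x' => nrm g x' y) x := by
  have h1 : DifferentiableAt ℝ Real.sqrt (Qf g x y) :=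
    (Real.hasDerivAt_sqrt (ne_of_gt hQ)).differentiableAt
  have h2 := h1.comp x (diffx_Qf g hg x y)
  exact h2

lemma diffx_LyF (hg : ∀ i j, ContDiff ℝ (⊤ : ℕ∞) (g i j)) (j : Fin n) (x y : Fin n → ℝ) :
    DifferentiableAt ℝ (fun x' => LyF g j x' y) x :=
  DifferentiableAt.fun_sum fun k _ =>
    (((hg j k).differentiable (by simp)).differentiableAt).mul_const (y k)

lemma diffx_CvF (hginv : ∀ i j, ContDiff ℝ (⊤ : ℕ∞) (ginv i j)) (hA : ∀ i, ContDiff ℝ (⊤ : ℕ∞) (A i))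
    (i : Fin n) (x y : Fin n → ℝ) :
    DifferentiableAt ℝ (fun x' => CvF ginv A i x' y) x :=
  DifferentiableAt.fun_sum fun j _ =>
    (((contDiff_cF ginv A hginv hA i j).differentiable (by simp)).differentiableAt).mul_const (y j)

lemma diffx_Bvec (hg : ∀ i j, ContDiff ℝ (⊤ : ℕ∞) (g i j)) (hginv : ∀ i j, ContDiff ℝ (⊤ : ℕ∞) (ginv i j))
    (hA : ∀ i, ContDiff ℝ (⊤ : ℕ∞) (A i)) (i : Fin n) (x y : Fin n → ℝ) (hQ : 0 < Qf g x y) :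
    DifferentiableAt ℝ (fun x' => Bvec g ginv (Fform A) α i x' y) x := by
  have h : DifferentiableAt ℝ
      (fun x' => -(α/2) * nrm g x' y * CvF ginv A i x' y) x :=
    ((differentiableAt_const _).mul (diffx_nrm g hg x y hQ)).mul
      (diffx_CvF ginv A hginv hA i x y)
  exact h

lemma diffx_B1e (hg : ∀ i j, ContDiff ℝ (⊤ : ℕ∞) (g i j)) (hginv : ∀ i j, ContDiff ℝ (⊤ : ℕ∞) (ginv i j))
    (hA : ∀ i, ContDiff ℝ (⊤ : ℕ∞) (A i)) (i j : Fin n) (x y : Fin n → ℝ) (hQ : 0 < Qf g x y) :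
    DifferentiableAt ℝ (fun x' => B1eF g ginv A α i j x' y) x := by
  have hs : nrm g x y ≠ 0 := ne_of_gt (Real.sqrt_pos.mpr hQ)
  have h : DifferentiableAt ℝ
      (fun x' => -(α/2) * (LyF g j x' y * (nrm g x' y)⁻¹ * CvF ginv A i x' y
        + nrm g x' y * cF ginv A i j x')) x :=
    (differentiableAt_const _).mul
      ((((diffx_LyF g hg j x y).mul ((diffx_nrm g hg x y hQ).inv hs)).mul
          (diffx_CvF ginv A hginv hA i x y)).add
        ((diffx_nrm g hg x y hQ).mul
          (((contDiff_cF ginv A hginv hA i j).differentiable (by simp)).differentiableAt)))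
  exact h

lemma contx_Qf (hg : ∀ i j, ContDiff ℝ (⊤ : ℕ∞) (g i j)) (y : Fin n → ℝ) :
    Continuous (fun x' => Qf g x' y) :=
  continuous_finset_sum _ fun i _ => continuous_finset_sum _ fun j _ =>
    (((hg i j).continuous).mul continuous_const).mul continuous_const

lemma conty_Qf (x : Fin n → ℝ) : Continuous (fun y' => Qf g x y') :=
  continuous_finset_sum _ fun i _ => continuous_finset_sum _ fun j _ =>
    (continuous_const.mul (continuous_apply i)).mul (continuous_apply j)

lemma evx (hg : ∀ i j, ContDiff ℝ (⊤ : ℕ∞) (g i j)) (x y : Fin n → ℝ) (hQ : 0 < Qf g x y) :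
    ∀ᶠ x' in nhds x, 0 < Qf g x' y :=
  ((contx_Qf g hg y).continuousAt).eventually (eventually_gt_nhds hQ)

lemma evy (x y : Fin n → ℝ) (hQ : 0 < Qf g x y) :
    ∀ᶠ y' in nhds y, 0 < Qf g x y' :=
  ((conty_Qf g x).continuousAt).eventually (eventually_gt_nhds hQ)

end XDeriv

section PL
variable (g ginv : Fin n → Fin n → (Fin n → ℝ) → ℝ) (A : Fin n → (Fin n → ℝ) → ℝ) (α : ℝ)

lemma pdyN (hg : ∀ i j, ContDiff ℝ (⊤ : ℕ∞) (g i j)) (hgsymm : ∀ i j x, g i j x = g j i x)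
    (i j l : Fin n) (x y : Fin n → ℝ) (hQ : 0 < Qf g x y) :
    pdy (Nspray (Gspray g ginv A α) i j) l x y
      = christoffel g ginv i j l x + B2eF g ginv A α i j l x y := by
  have hev : (fun y' => Nspray (Gspray g ginv A α) i j x y')
      =ᶠ[nhds y] fun y' => NLC g ginv i j x y' + B1eF g ginv A α i j x y' :=
    (evy g x y hQ).mono fun y' hy' => Nspray_eq g ginv A α hgsymm i j x y' hy'
  have h0 : pdy (Nspray (Gspray g ginv A α) i j) l x y
      = fderiv ℝ (fun y' => Nspray (Gspray g ginv A α) i j x y') y (Pi.single l 1) := rfl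
  rw [h0, hev.fderiv_eq, fderiv_fun_add (diffy_NLC g ginv i j x y) (diffy_B1e g ginv A α i j x y hQ),
    ContinuousLinearMap.add_apply]
  have e1 : fderiv ℝ (fun y' => NLC g ginv i j x y') y (Pi.single l 1)
      = christoffel g ginv i j l x := pdy_NLC g ginv i j l x y
  have e2 : fderiv ℝ (fun y' => B1eF g ginv A α i j x y') y (Pi.single l 1)
      = B2eF g ginv A α i j l x y := pdy_B1e g ginv A α hgsymm i j l x y hQ
  rw [e1, e2]

lemma pdxN (hg : ∀ i j, ContDiff ℝ (⊤ : ℕ∞) (g i j)) (hginv : ∀ i j, ContDiff ℝ (⊤ : ℕ∞) (ginv i j))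
    (hA : ∀ i, ContDiff ℝ (⊤ : ℕ∞) (A i)) (hgsymm : ∀ i j x, g i j x = g j i x)
    (i j k : Fin n) (x y : Fin n → ℝ) (hQ : 0 < Qf g x y) :
    pdx (Nspray (Gspray g ginv A α) i j) k x y
      = pdx (NLC g ginv i j) k x y + pdx (B1eF g ginv A α i j) k x y := by
  have hev : (fun x' => Nspray (Gspray g ginv A α) i j x' y)
      =ᶠ[nhds x] fun x' => NLC g ginv i j x' y + B1eF g ginv A α i j x' y :=
    (evx g hg x y hQ).mono fun x' hx' => Nspray_eq g ginv A α hgsymm i j x' y hx'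
  have h0 : pdx (Nspray (Gspray g ginv A α) i j) k x y
      = fderiv ℝ (fun x' => Nspray (Gspray g ginv A α) i j x' y) x (Pi.single k 1) := rfl
  rw [h0, hev.fderiv_eq, fderiv_fun_add (diffx_NLC g ginv hg hginv i j x y)
    (diffx_B1e g ginv A α hg hginv hA i j x y hQ), ContinuousLinearMap.add_apply]
  rfl

lemma sum_pdx_B1e_diag (hg : ∀ i j, ContDiff ℝ (⊤ : ℕ∞) (g i j))
    (hginv : ∀ i j, ContDiff ℝ (⊤ : ℕ∞) (ginv i j)) (hA : ∀ i, ContDiff ℝ (⊤ : ℕ∞) (A i))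
    (hgsymm : ∀ i j x, g i j x = g j i x)
    (hinv : ∀ i j x, (∑ h, ginv i h x * g h j x) = if i = j then (1 : ℝ) else 0)
    (k : Fin n) (x y : Fin n → ℝ) (hQ : 0 < Qf g x y) :
    (∑ i, pdx (B1eF g ginv A α i i) k x y) = 0 := by
  have hdi : ∀ i ∈ Finset.univ, DifferentiableAt ℝ
      (fun x' => B1eF g ginv A α i i x' y) x :=
    fun i _ => diffx_B1e g ginv A α hg hginv hA i i x y hQ
  have h1 : (∑ i, pdx (B1eF g ginv A α i i) k x y)
      = fderiv ℝ (fun x' => ∑ i, B1eF g ginv A α i i x' y) x (Pi.single k 1) := by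
    rw [fderiv_fun_sum hdi, ContinuousLinearMap.sum_apply]
    rfl
  have hev : (fun x' => ∑ i, B1eF g ginv A α i i x' y) =ᶠ[nhds x] fun _ => (0:ℝ) :=
    (evx g hg x y hQ).mono fun x' hx' => traceB1 g ginv A α hgsymm hinv x' y hx'
  rw [h1, hev.fderiv_eq]
  simp

lemma sum_pdx_B1e_euler (hg : ∀ i j, ContDiff ℝ (⊤ : ℕ∞) (g i j))
    (hginv : ∀ i j, ContDiff ℝ (⊤ : ℕ∞) (ginv i j)) (hA : ∀ i, ContDiff ℝ (⊤ : ℕ∞) (A i))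
    (hgsymm : ∀ i j x, g i j x = g j i x)
    (i : Fin n) (x y : Fin n → ℝ) (hQ : 0 < Qf g x y) :
    (∑ k, pdx (B1eF g ginv A α i k) i x y * y k)
      = 2 * pdx (Bvec g ginv (Fform A) α i) i x y := by
  have hdi : ∀ k ∈ Finset.univ, DifferentiableAt ℝ
      (fun x' => B1eF g ginv A α i k x' y * y k) x :=
    fun k _ => (diffx_B1e g ginv A α hg hginv hA i k x y hQ).mul_const (y k)
  have h1 : (∑ k, pdx (B1eF g ginv A α i k) i x y * y k)
      = fderiv ℝ (fun x' => ∑ k, B1eF g ginv A α i k x' y * y k) x (Pi.single i 1) := by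
    rw [fderiv_fun_sum hdi, ContinuousLinearMap.sum_apply]
    refine Finset.sum_congr rfl fun k _ => ?_
    rw [fderiv_mul_const (diffx_B1e g ginv A α hg hginv hA i k x y hQ)]
    simp only [ContinuousLinearMap.smul_apply, smul_eq_mul]
    rw [mul_comm]
    rfl
  have hev : (fun x' => ∑ k, B1eF g ginv A α i k x' y * y k)
      =ᶠ[nhds x] fun x' => 2 * Bvec g ginv (Fform A) α i x' y :=
    (evx g hg x y hQ).mono fun x' hx' => eulerB1 g ginv A α i x' y hx'
  rw [h1, hev.fderiv_eq, fderiv_const_mul (diffx_Bvec g ginv A α hg hginv hA i x y hQ)]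
  simp only [ContinuousLinearMap.smul_apply, smul_eq_mul]
  rfl

end PL

section TraceAlgebra

lemma trace_algebra (y : Fin n → ℝ) (χ P X β2 : Fin n → Fin n → Fin n → ℝ)
    (n0 β : Fin n → Fin n → ℝ) (bb d : Fin n → ℝ)
    (F1 : ∀ k, (∑ i, X i i k) = 0)
    (F2 : ∀ i, (∑ k, X i k i * y k) = 2 * d i)
    (F3 : ∀ l, (∑ k, β l k * y k) = 2 * bb l)
    (F4 : ∀ i l, (∑ k, β2 i k l * y k) = β i l)
    (F5 : ∀ l, (∑ i, β2 i i l) = 0)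
    (F6 : ∀ i j k, χ i j k = χ i k j)
    (F7 : ∀ i j, n0 i j = ∑ k, χ i j k * y k) :
    (∑ i, ∑ k, (P i i k + X i i k - ∑ l, (n0 l k + β l k) * (χ i i l + β2 i i l)
      - (P i k i + X i k i - ∑ l, (n0 l i + β l i) * (χ i k l + β2 i k l))) * y k)
    = (∑ i, ∑ k, (P i i k - ∑ l, n0 l k * χ i i l
        - (P i k i - ∑ l, n0 l i * χ i k l)) * y k)
      - 2 * (∑ i, (d i - ∑ l, n0 l i * β i l + ∑ k, χ i k i * bb k))
      + ∑ l, ∑ i, β l i * β i l := by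
  have hS1 : (∑ i, ∑ k, X i i k * y k) = 0 := by
    rw [Finset.sum_comm]
    refine Finset.sum_eq_zero fun k _ => ?_
    rw [← Finset.sum_mul, F1 k, zero_mul]
  have hS2 : (∑ i, ∑ k, X i k i * y k) = 2 * ∑ i, d i := by
    rw [Finset.mul_sum]
    exact Finset.sum_congr rfl fun i _ => F2 i
  have hS3a : (∑ i, ∑ k, ∑ l, n0 l k * β2 i i l * y k) = 0 := by
    rw [Finset.sum_comm]
    refine Finset.sum_eq_zero fun k _ => ?_
    rw [Finset.sum_comm]
    refine Finset.sum_eq_zero fun l _ => ?_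
    calc (∑ i, n0 l k * β2 i i l * y k) = (n0 l k * y k) * ∑ i, β2 i i l := by
          rw [Finset.mul_sum]
          exact Finset.sum_congr rfl fun i _ => by ring
    _ = 0 := by rw [F5 l, mul_zero]
  have hS3c : (∑ i, ∑ k, ∑ l, β l k * β2 i i l * y k) = 0 := by
    rw [Finset.sum_comm]
    refine Finset.sum_eq_zero fun k _ => ?_
    rw [Finset.sum_comm]
    refine Finset.sum_eq_zero fun l _ => ?_
    calc (∑ i, β l k * β2 i i l * y k) = (β l k * y k) * ∑ i, β2 i i l := by
          rw [Finset.mul_sum]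
          exact Finset.sum_congr rfl fun i _ => by ring
    _ = 0 := by rw [F5 l, mul_zero]
  have hS3b : (∑ i, ∑ k, ∑ l, β l k * χ i i l * y k) = 2 * ∑ i, ∑ k, χ i k i * bb k := by
    rw [Finset.mul_sum]
    refine Finset.sum_congr rfl fun i _ => ?_
    rw [Finset.sum_comm, Finset.mul_sum]
    refine Finset.sum_congr rfl fun l _ => ?_
    calc (∑ k, β l k * χ i i l * y k) = χ i i l * ∑ k, β l k * y k := by
          rw [Finset.mul_sum]
          exact Finset.sum_congr rfl fun k _ => by ring
    _ = χ i i l * (2 * bb l) := by rw [F3 l]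
    _ = 2 * (χ i l i * bb l) := by rw [F6 i i l]; ring
  have hS4a : (∑ i, ∑ k, ∑ l, n0 l i * β2 i k l * y k) = ∑ i, ∑ l, n0 l i * β i l := by
    refine Finset.sum_congr rfl fun i _ => ?_
    rw [Finset.sum_comm]
    refine Finset.sum_congr rfl fun l _ => ?_
    calc (∑ k, n0 l i * β2 i k l * y k) = n0 l i * ∑ k, β2 i k l * y k := by
          rw [Finset.mul_sum]
          exact Finset.sum_congr rfl fun k _ => by ring
    _ = n0 l i * β i l := by rw [F4 i l]
  have hS4b : (∑ i, ∑ k, ∑ l, β l i * χ i k l * y k) = ∑ i, ∑ l, n0 l i * β i l := by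
    have h1 : (∑ i, ∑ k, ∑ l, β l i * χ i k l * y k) = ∑ i, ∑ l, β l i * n0 i l := by
      refine Finset.sum_congr rfl fun i _ => ?_
      rw [Finset.sum_comm]
      refine Finset.sum_congr rfl fun l _ => ?_
      calc (∑ k, β l i * χ i k l * y k) = β l i * ∑ k, χ i l k * y k := by
            rw [Finset.mul_sum]
            refine Finset.sum_congr rfl fun k _ => ?_
            rw [F6 i k l]
            ring
      _ = β l i * n0 i l := by rw [← F7 i l]
    rw [h1, Finset.sum_comm]
    exact Finset.sum_congr rfl fun a _ => Finset.sum_congr rfl fun b _ => mul_comm _ _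
  have hS4c : (∑ i, ∑ k, ∑ l, β l i * β2 i k l * y k) = ∑ l, ∑ i, β l i * β i l := by
    have h1 : (∑ i, ∑ k, ∑ l, β l i * β2 i k l * y k) = ∑ i, ∑ l, β l i * β i l := by
      refine Finset.sum_congr rfl fun i _ => ?_
      rw [Finset.sum_comm]
      refine Finset.sum_congr rfl fun l _ => ?_
      calc (∑ k, β l i * β2 i k l * y k) = β l i * ∑ k, β2 i k l * y k := by
            rw [Finset.mul_sum]
            exact Finset.sum_congr rfl fun k _ => by ring
      _ = β l i * β i l := by rw [F4 i l]
    rw [h1, Finset.sum_comm]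
  have hsplit : ∀ i k : Fin n,
      (P i i k + X i i k - ∑ l, (n0 l k + β l k) * (χ i i l + β2 i i l)
        - (P i k i + X i k i - ∑ l, (n0 l i + β l i) * (χ i k l + β2 i k l))) * y k
      = (P i i k - ∑ l, n0 l k * χ i i l - (P i k i - ∑ l, n0 l i * χ i k l)) * y k
        + (X i i k * y k - X i k i * y k
          - (∑ l, n0 l k * β2 i i l * y k + ∑ l, β l k * χ i i l * y k
              + ∑ l, β l k * β2 i i l * y k)
          + (∑ l, n0 l i * β2 i k l * y k + ∑ l, β l i * χ i k l * y k
              + ∑ l, β l i * β2 i k l * y k)) := by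
    intro i k
    have e1 : (∑ l, (n0 l k + β l k) * (χ i i l + β2 i i l))
        = ∑ l, n0 l k * χ i i l + (∑ l, n0 l k * β2 i i l + ∑ l, β l k * χ i i l
            + ∑ l, β l k * β2 i i l) := by
      rw [← Finset.sum_add_distrib, ← Finset.sum_add_distrib, ← Finset.sum_add_distrib]
      exact Finset.sum_congr rfl fun l _ => by ring
    have e2 : (∑ l, (n0 l i + β l i) * (χ i k l + β2 i k l))
        = ∑ l, n0 l i * χ i k l + (∑ l, n0 l i * β2 i k l + ∑ l, β l i * χ i k l
            + ∑ l, β l i * β2 i k l) := by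
      rw [← Finset.sum_add_distrib, ← Finset.sum_add_distrib, ← Finset.sum_add_distrib]
      exact Finset.sum_congr rfl fun l _ => by ring
    rw [e1, e2]
    rw [show (∑ l, n0 l k * β2 i i l * y k) = (∑ l, n0 l k * β2 i i l) * y k
        from (Finset.sum_mul _ _ _).symm,
      show (∑ l, β l k * χ i i l * y k) = (∑ l, β l k * χ i i l) * y k
        from (Finset.sum_mul _ _ _).symm,
      show (∑ l, β l k * β2 i i l * y k) = (∑ l, β l k * β2 i i l) * y k
        from (Finset.sum_mul _ _ _).symm,
      show (∑ l, n0 l i * β2 i k l * y k) = (∑ l, n0 l i * β2 i k l) * y k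
        from (Finset.sum_mul _ _ _).symm,
      show (∑ l, β l i * χ i k l * y k) = (∑ l, β l i * χ i k l) * y k
        from (Finset.sum_mul _ _ _).symm,
      show (∑ l, β l i * β2 i k l * y k) = (∑ l, β l i * β2 i k l) * y k
        from (Finset.sum_mul _ _ _).symm]
    ring
  calc (∑ i, ∑ k, (P i i k + X i i k - ∑ l, (n0 l k + β l k) * (χ i i l + β2 i i l)
      - (P i k i + X i k i - ∑ l, (n0 l i + β l i) * (χ i k l + β2 i k l))) * y k)
      = ∑ i, ∑ k, ((P i i k - ∑ l, n0 l k * χ i i l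
          - (P i k i - ∑ l, n0 l i * χ i k l)) * y k
        + (X i i k * y k - X i k i * y k
          - (∑ l, n0 l k * β2 i i l * y k + ∑ l, β l k * χ i i l * y k
              + ∑ l, β l k * β2 i i l * y k)
          + (∑ l, n0 l i * β2 i k l * y k + ∑ l, β l i * χ i k l * y k
              + ∑ l, β l i * β2 i k l * y k))) :=
        Finset.sum_congr rfl fun i _ => Finset.sum_congr rfl fun k _ => hsplit i k
  _ = (∑ i, ∑ k, (P i i k - ∑ l, n0 l k * χ i i l
        - (P i k i - ∑ l, n0 l i * χ i k l)) * y k)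
      + ((∑ i, ∑ k, X i i k * y k) - (∑ i, ∑ k, X i k i * y k)
        - ((∑ i, ∑ k, ∑ l, n0 l k * β2 i i l * y k)
            + (∑ i, ∑ k, ∑ l, β l k * χ i i l * y k)
            + (∑ i, ∑ k, ∑ l, β l k * β2 i i l * y k))
        + ((∑ i, ∑ k, ∑ l, n0 l i * β2 i k l * y k)
            + (∑ i, ∑ k, ∑ l, β l i * χ i k l * y k)
            + (∑ i, ∑ k, ∑ l, β l i * β2 i k l * y k))) := by
      simp only [Finset.sum_add_distrib, Finset.sum_sub_distrib]
  _ = (∑ i, ∑ k, (P i i k - ∑ l, n0 l k * χ i i l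
        - (P i k i - ∑ l, n0 l i * χ i k l)) * y k)
      - 2 * (∑ i, (d i - ∑ l, n0 l i * β i l + ∑ k, χ i k i * bb k))
      + ∑ l, ∑ i, β l i * β i l := by
      rw [hS1, hS2, hS3a, hS3b, hS3c, hS4a, hS4b, hS4c]
      rw [Finset.sum_add_distrib, Finset.sum_sub_distrib]
      ring

end TraceAlgebra

/-- The trace of the tidal tensor of the Randers spray connection decomposes as
`E^i_i = e^i_i − 2 D⁰_{δ_i} B^i + B^l_i B^i_l`, where `e^i_i` is the trace of the
gravitational (α = 0) tidal tensor, `B^i_j = ∂B^i/∂y^j`, and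
`D⁰_{δ_i} B^i = δ⁰_i B^i + γ^i_{ki} B^k` is the horizontal divergence of `B` with respect
to the Levi-Civita spray connection. -/
theorem randers_tidal_trace_decomposition
    (g ginv : Fin n → Fin n → (Fin n → ℝ) → ℝ)
    (A : Fin n → (Fin n → ℝ) → ℝ) (α : ℝ)
    (hg : ∀ i j, ContDiff ℝ (⊤ : ℕ∞) (g i j)) (hginv : ∀ i j, ContDiff ℝ (⊤ : ℕ∞) (ginv i j))
    (hA : ∀ i, ContDiff ℝ (⊤ : ℕ∞) (A i))
    (hgsymm : ∀ i j x, g i j x = g j i x)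
    (hinv : ∀ i j x, (∑ h, ginv i h x * g h j x) = if i = j then (1 : ℝ) else 0) :
    ∀ (x y : Fin n → ℝ), 0 < Qf g x y →
      (∑ i, tidal (Nspray (Gspray g ginv A α)) i i x y)
        = (∑ i, tidal (NLC g ginv) i i x y)
          - 2 * (∑ i, (deltaD (NLC g ginv) i (Bvec g ginv (Fform A) α i) x y
              + ∑ k, christoffel g ginv i k i x * Bvec g ginv (Fform A) α k x y))
          + ∑ l, ∑ i, pdy (Bvec g ginv (Fform A) α l) i x y
              * pdy (Bvec g ginv (Fform A) α i) l x y := by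
  intro x y hQ
  have hN : ∀ l k, Nspray (Gspray g ginv A α) l k x y
      = NLC g ginv l k x y + B1eF g ginv A α l k x y :=
    fun l k => Nspray_eq g ginv A α hgsymm l k x y hQ
  have hpdyN : ∀ i j l, pdy (Nspray (Gspray g ginv A α) i j) l x y
      = christoffel g ginv i j l x + B2eF g ginv A α i j l x y :=
    fun i j l => pdyN g ginv A α hg hgsymm i j l x y hQ
  have hpdxN : ∀ i j k, pdx (Nspray (Gspray g ginv A α) i j) k x y
      = pdx (NLC g ginv i j) k x y + pdx (B1eF g ginv A α i j) k x y :=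
    fun i j k => pdxN g ginv A α hg hginv hA hgsymm i j k x y hQ
  have hpdyNLC : ∀ i j l, pdy (NLC g ginv i j) l x y = christoffel g ginv i j l x :=
    fun i j l => pdy_NLC g ginv i j l x y
  have hpdyB : ∀ i l, pdy (Bvec g ginv (Fform A) α i) l x y = B1eF g ginv A α i l x y :=
    fun i l => pdy_Bvec g ginv A α hgsymm i l x y hQ
  simp only [tidal, curvN, deltaD, hN, hpdyN, hpdxN, hpdyNLC, hpdyB]
  exact trace_algebra y (fun i j k => christoffel g ginv i j k x)
    (fun i j k => pdx (NLC g ginv i j) k x y)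
    (fun i j k => pdx (B1eF g ginv A α i j) k x y)
    (fun i j l => B2eF g ginv A α i j l x y)
    (fun l k => NLC g ginv l k x y)
    (fun i j => B1eF g ginv A α i j x y)
    (fun k => Bvec g ginv (Fform A) α k x y)
    (fun i => pdx (Bvec g ginv (Fform A) α i) i x y)
    (fun k => sum_pdx_B1e_diag g ginv A α hg hginv hA hgsymm hinv k x y hQ)
    (fun i => sum_pdx_B1e_euler g ginv A α hg hginv hA hgsymm i x y hQ)
    (fun l => eulerB1 g ginv A α l x y hQ)
    (fun i l => eulerB2 g ginv A α hgsymm hinv i l x y hQ)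
    (fun l => traceB2 g ginv A α hgsymm hinv l x y hQ)
    (fun i j k => christoffel_symm g ginv hgsymm i j k x)
    (fun i j => rfl)
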